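/- Let Ω ⊆ ℍ be an axially symmetric s-domain, let f, g : Ω → ℍ be slice regular, fix I, J ∈ 𝕊 with I ⊥ J, and split f = F+G·J and g = H+K·J on Ω ∩ L_I with F, G, H, K holomorphic into L_I. For a slice regular function p with splitting p = P+Q·J on Ω ∩ L_I, let p^s (the symmetrization of p) denote the unique slice regular function on Ω whose restriction to Ω ∩ L_I equals P·conj(P∘conj) + Q·conj(Q∘conj), and let f∗g denote the regular product, the unique slice regular function whose restriction to Ω ∩ L_I equals (FH − G·conj(K∘conj)) + (FK + G·conj(H∘conj))·J. Then (f∗g)^s(q) = f^s(q)·g^s(q) = g^s(q)·f^s(q) for every q ∈ Ω, where · is pointwise quaternion multiplication. -/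

import Mathlib

open Quaternion

noncomputable section

/-- The 2-sphere of imaginary units in the quaternions. -/
def SpH : Set ℍ[ℝ] := {q | q.re = 0 ∧ ‖q‖ = 1}

/-- The slice (complex plane) `L_I = {x + y I : x, y ∈ ℝ}`. -/
def sliceL (I : ℍ[ℝ]) : Set ℍ[ℝ] := {q | ∃ x y : ℝ, q = (x : ℍ[ℝ]) + y • I}

/-- `f` has continuous partial derivatives on the `I`-slice part of `Ω` and satisfies the
Cauchy–Riemann equation `∂f/∂x + I ∂f/∂y = 0` there. -/
def SliceHolomorphicOn (I : ℍ[ℝ]) (f : ℍ[ℝ] → ℍ[ℝ]) (Ω : Set ℍ[ℝ]) : Prop :=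
  ∃ fx fy : ℝ → ℝ → ℍ[ℝ],
    (∀ x y : ℝ, (x : ℍ[ℝ]) + y • I ∈ Ω →
      HasDerivAt (fun t : ℝ => f ((t : ℍ[ℝ]) + y • I)) (fx x y) x) ∧
    (∀ x y : ℝ, (x : ℍ[ℝ]) + y • I ∈ Ω →
      HasDerivAt (fun t : ℝ => f ((x : ℍ[ℝ]) + t • I)) (fy x y) y) ∧
    ContinuousOn (fun p : ℝ × ℝ => fx p.1 p.2) {p : ℝ × ℝ | (p.1 : ℍ[ℝ]) + p.2 • I ∈ Ω} ∧
    ContinuousOn (fun p : ℝ × ℝ => fy p.1 p.2) {p : ℝ × ℝ | (p.1 : ℍ[ℝ]) + p.2 • I ∈ Ω} ∧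
    ∀ x y : ℝ, (x : ℍ[ℝ]) + y • I ∈ Ω → fx x y + I * fy x y = 0

/-- `f` is slice regular on `Ω`. -/
def SliceRegularOn (f : ℍ[ℝ] → ℍ[ℝ]) (Ω : Set ℍ[ℝ]) : Prop :=
  ∀ I ∈ SpH, SliceHolomorphicOn I f Ω

/-- `Ω` is axially symmetric. -/
def AxSymm (Ω : Set ℍ[ℝ]) : Prop :=
  ∀ (x y : ℝ), ∀ I ∈ SpH, (x : ℍ[ℝ]) + y • I ∈ Ω → ∀ J ∈ SpH, (x : ℍ[ℝ]) + y • J ∈ Ω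

/-- `Ω` is an s-domain: a domain meeting the real axis whose slices are connected. -/
def IsSDomain (Ω : Set ℍ[ℝ]) : Prop :=
  IsOpen Ω ∧ IsConnected Ω ∧ (∃ x : ℝ, (x : ℍ[ℝ]) ∈ Ω) ∧
    ∀ I ∈ SpH, IsConnected (Ω ∩ sliceL I)

/-- The axially symmetric completion of a set `S ⊆ ℍ`. -/
def symmComp (S : Set ℍ[ℝ]) : Set ℍ[ℝ] :=
  {q | ∃ (x y : ℝ) (I : ℍ[ℝ]), I ∈ SpH ∧ q = (x : ℍ[ℝ]) + y • I ∧
    ∃ J ∈ SpH, (x : ℍ[ℝ]) + y • J ∈ S}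

/-- A domain of the slice `L_I`: a nonempty connected relatively open subset of `L_I`. -/
def IsSliceDomain (I : ℍ[ℝ]) (D : Set ℍ[ℝ]) : Prop :=
  D ⊆ sliceL I ∧ IsConnected D ∧ IsOpen {p : ℝ × ℝ | (p.1 : ℍ[ℝ]) + p.2 • I ∈ D}

/-!
On the slice `L_I ≅ ℂ` the splitting components take values in the commutative field `L_I`, so
there `(f ∗ g)ˢ = fˢ gˢ` is a polynomial identity in the components and their reflections
`z ↦ conj (·(conj z))`, in which the cross terms cancel; moreover each symmetrization `s` maps
the slice into `L_I` and satisfies `s(z̄) = conj (s z)`.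

A slice regular function on an axially symmetric s-domain is determined by one slice through the
representation formula `2 s(x + yJ) = (1 - JI) s(x + yI) + (1 + JI) s(x - yI)`, obtained from the
identity principle on `L_J`, where `s` is holomorphic for the complex structure given by left
multiplication by `J`. For the symmetrizations the formula says that `s(x + yJ)` is the copy in
`L_J` of `s(x + yI) ∈ L_I`, and since `x + iy ↦ x + yJ` is a ring homomorphism the product
identity propagates from `L_I` to every slice.
-/

section
open ComplexConjugate Filter Topology

variable {u v I J : ℍ[ℝ]} {Ω : Set ℍ[ℝ]}

theorem star_eq_neg_of_mem_SpH (hu : u ∈ SpH) : star u = -u :=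
  Quaternion.star_eq_neg.2 hu.1

theorem mul_self_eq_neg_one_of_mem_SpH (hu : u ∈ SpH) : u * u = -1 := by
  have h := Quaternion.self_mul_star u
  rw [star_eq_neg_of_mem_SpH hu, mul_neg, Quaternion.normSq_eq_norm_mul_self, hu.2, mul_one,
    Quaternion.coe_one] at h
  exact neg_eq_iff_eq_neg.1 h

theorem neg_mem_SpH (hu : u ∈ SpH) : -u ∈ SpH :=
  ⟨by simp [hu.1], by rw [norm_neg, hu.2]⟩

def sliceEmb (u : ℍ[ℝ]) (hu : u ∈ SpH) : ℂ →⋆ₐ[ℝ] ℍ[ℝ] where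
  toFun z := (z.re : ℍ[ℝ]) + z.im • u
  map_one' := by simp
  map_zero' := by simp
  map_add' a b := by simp only [Complex.add_re, Complex.add_im, add_smul, Quaternion.coe_add]; abel
  map_mul' a b := by
    have h (r : ℝ) : (r : ℍ[ℝ]) = r • (1 : ℍ[ℝ]) := by rw [← coe_mul_eq_smul, mul_one]
    simp only [h, Complex.mul_re, Complex.mul_im, add_mul, mul_add, smul_mul_smul_comm,
      mul_self_eq_neg_one_of_mem_SpH hu, one_mul, mul_one]
    module
  commutes' r := by simp [Complex.coe_algebraMap]
  map_star' z := by simp [star_eq_neg_of_mem_SpH hu]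

theorem sliceEmb_apply (hu : u ∈ SpH) (z : ℂ) :
    sliceEmb u hu z = (z.re : ℍ[ℝ]) + z.im • u := rfl

theorem sliceEmb_conj (hu : u ∈ SpH) (z : ℂ) :
    sliceEmb u hu (conj z) = sliceEmb (-u) (neg_mem_SpH hu) z := by
  simp [sliceEmb_apply]

theorem star_sliceEmb (hu : u ∈ SpH) (z : ℂ) :
    star (sliceEmb u hu z) = sliceEmb (-u) (neg_mem_SpH hu) z := by
  rw [← map_star, Complex.star_def, sliceEmb_conj]

theorem sliceEmb_ofReal (hu : u ∈ SpH) (x : ℝ) : sliceEmb u hu x = x := by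
  simp [sliceEmb_apply]

theorem norm_sliceEmb (hu : u ∈ SpH) (z : ℂ) : ‖sliceEmb u hu z‖ = ‖z‖ := by
  have h : normSq (sliceEmb u hu z) = Complex.normSq z := by
    apply Quaternion.coe_injective
    rw [← self_mul_star, ← map_star, ← map_mul, Complex.star_def, Complex.mul_conj, sliceEmb_ofReal]
  rw [normSq_eq_norm_mul_self, Complex.normSq_eq_norm_sq, sq] at h
  exact (mul_self_inj (norm_nonneg _) (norm_nonneg _)).1 h

theorem isometry_sliceEmb (hu : u ∈ SpH) : Isometry (sliceEmb u hu) :=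
  AddMonoidHomClass.isometry_of_norm _ (norm_sliceEmb hu)

theorem range_sliceEmb (hu : u ∈ SpH) : Set.range (sliceEmb u hu) = sliceL u := by
  ext q
  constructor
  · rintro ⟨z, rfl⟩
    exact ⟨z.re, z.im, rfl⟩
  · rintro ⟨x, y, rfl⟩
    exact ⟨⟨x, y⟩, rfl⟩

theorem sliceEmb_mem_sliceL (hu : u ∈ SpH) (z : ℂ) : sliceEmb u hu z ∈ sliceL u :=
  range_sliceEmb hu ▸ Set.mem_range_self z

theorem AxSymm.sliceEmb_mem (hax : AxSymm Ω) (hu : u ∈ SpH) (hv : v ∈ SpH) {z : ℂ}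
    (hz : sliceEmb u hu z ∈ Ω) : sliceEmb v hv z ∈ Ω :=
  hax z.re z.im u hu hz v hv

theorem AxSymm.star_mem (hax : AxSymm Ω) (hu : u ∈ SpH) {w : ℍ[ℝ]} (hw : w ∈ Ω ∩ sliceL u) :
    star w ∈ Ω ∩ sliceL u := by
  obtain ⟨hwΩ, z, rfl⟩ : w ∈ Ω ∩ Set.range (sliceEmb u hu) := range_sliceEmb hu ▸ hw
  rw [star_sliceEmb]
  exact ⟨hax.sliceEmb_mem hu _ hwΩ, sliceEmb_conj hu z ▸ sliceEmb_mem_sliceL hu _⟩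

theorem exists_sliceEmb_eq (q : ℍ[ℝ]) : ∃ u, ∃ hu : u ∈ SpH, ∃ z : ℂ, sliceEmb u hu z = q := by
  by_cases him : q.im = 0
  · have hi : (⟨0, 1, 0, 0⟩ : ℍ[ℝ]) ∈ SpH :=
      ⟨rfl, (mul_self_inj (norm_nonneg _) zero_le_one).1 <|
        (normSq_eq_norm_mul_self _).symm.trans <| (normSq_def' _).trans <| by norm_num⟩
    refine ⟨_, hi, q.re, ?_⟩
    rw [← q.re_add_im, him, add_zero]
    exact sliceEmb_ofReal hi q.re
  · have hn : ‖q.im‖ ≠ 0 := norm_ne_zero_iff.2 him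
    refine ⟨‖q.im‖⁻¹ • q.im, ⟨by simp, by rw [norm_smul, norm_inv, norm_norm, inv_mul_cancel₀ hn]⟩,
      ⟨q.re, ‖q.im‖⟩, ?_⟩
    change (q.re : ℍ[ℝ]) + ‖q.im‖ • (‖q.im‖⁻¹ • q.im) = q
    rw [smul_smul, mul_inv_cancel₀ hn, one_smul, q.re_add_im]

def CauchyRiemannOn (u : ℍ[ℝ]) (m : ℂ → ℍ[ℝ]) (U : Set ℂ) : Prop :=
  ∀ z ∈ U, ∃ L : ℂ →L[ℝ] ℍ[ℝ], HasFDerivAt m L z ∧ L Complex.I = u * L 1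

namespace CauchyRiemannOn

variable {m m₁ m₂ : ℂ → ℍ[ℝ]} {U V : Set ℂ}

theorem mono (h : CauchyRiemannOn u m V) (hUV : U ⊆ V) : CauchyRiemannOn u m U :=
  fun z hz => h z (hUV hz)

theorem add (h₁ : CauchyRiemannOn u m₁ U) (h₂ : CauchyRiemannOn u m₂ U) :
    CauchyRiemannOn u (fun z => m₁ z + m₂ z) U := by
  intro z hz
  obtain ⟨L₁, hL₁, hI₁⟩ := h₁ z hz
  obtain ⟨L₂, hL₂, hI₂⟩ := h₂ z hz
  exact ⟨L₁ + L₂, hL₁.add hL₂, by simp only [add_apply, hI₁, hI₂, mul_add]⟩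

theorem const_mul {c : ℍ[ℝ]} (hc : c * u = v * c) (h : CauchyRiemannOn u m U) :
    CauchyRiemannOn v (fun z => c * m z) U := by
  intro z hz
  obtain ⟨L, hL, hI⟩ := h z hz
  exact ⟨c • L, hL.const_mul c, by
    simp only [smul_apply, smul_eq_mul, hI, ← mul_assoc, hc]⟩

theorem eqOn_of_preconnected_of_frequently_eq (hu : u ∈ SpH) (h₁ : CauchyRiemannOn u m₁ U)
    (h₂ : CauchyRiemannOn u m₂ U) (hU : IsOpen U) (hU' : IsPreconnected U) {z₀ : ℂ}
    (hz₀ : z₀ ∈ U) (hfreq : ∃ᶠ z in 𝓝[≠] z₀, m₁ z = m₂ z) : Set.EqOn m₁ m₂ U := by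
  -- Left multiplication by `sliceEmb u` makes `ℍ` a normed `ℂ`-space, for which the functions
  -- satisfying `CauchyRiemannOn u` are complex differentiable.
  let _ : Module ℂ ℍ[ℝ] := Module.compHom _ (sliceEmb u hu).toRingHom
  have smul_def (z : ℂ) (q : ℍ[ℝ]) : z • q = sliceEmb u hu z * q := rfl
  let _ : NormedSpace ℂ ℍ[ℝ] := ⟨fun z q => by rw [smul_def, norm_mul, norm_sliceEmb]⟩
  let _ : IsScalarTower ℝ ℂ ℍ[ℝ] := ⟨fun r z q => by
    rw [smul_def, smul_def, Complex.real_smul, map_mul, sliceEmb_ofReal, mul_assoc,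
      coe_mul_eq_smul]⟩
  have analytic {m : ℂ → ℍ[ℝ]} (hm : CauchyRiemannOn u m U) : AnalyticOnNhd ℂ m U := by
    refine DifferentiableOn.analyticOnNhd (fun z hz => ?_) hU
    obtain ⟨L, hL, hI⟩ := hm z hz
    refine (hasFDerivAt_of_restrictScalars ℝ hL (f' := .toSpanSingleton ℂ (L 1)) ?_
      ).differentiableAt.differentiableWithinAt
    refine ContinuousLinearMap.ext fun w => ?_
    have hLw : L w = w.re • L 1 + w.im • L Complex.I := by
      rw [← map_smul, ← map_smul, ← map_add]
      congr 1
      apply Complex.ext <;> simp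
    change sliceEmb u hu w * L 1 = L w
    rw [hLw, hI, sliceEmb_apply, add_mul, coe_mul_eq_smul, smul_mul_assoc]
  exact (analytic h₁).eqOn_of_preconnected_of_frequently_eq (analytic h₂) hU' hz₀ hfreq

end CauchyRiemannOn

theorem SliceHolomorphicOn.cauchyRiemannOn {f : ℍ[ℝ] → ℍ[ℝ]} (hu : u ∈ SpH) (hΩ : IsOpen Ω)
    (hf : SliceHolomorphicOn u f Ω) :
    CauchyRiemannOn u (fun z => f (sliceEmb u hu z)) (sliceEmb u hu ⁻¹' Ω) := by
  obtain ⟨fx, fy, hfx, hfy, hcx, hcy, hcr⟩ := hf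
  intro z hz
  have hV : {p : ℝ × ℝ | (p.1 : ℍ[ℝ]) + p.2 • u ∈ Ω} ∈ 𝓝 (z.re, z.im) :=
    (hΩ.preimage ((continuous_coe.comp continuous_fst).add
      (continuous_snd.smul continuous_const))).mem_nhds hz
  have hstrict := hasStrictFDerivAt_uncurry_coprod (f := fun x y : ℝ => f ((x : ℍ[ℝ]) + y • u))
    (f₁ := fun x y => .toSpanSingleton ℝ (fx x y)) (f₂ := fun x y => .toSpanSingleton ℝ (fy x y))
    (Filter.mem_of_superset hV fun p hp => (hfx p.1 p.2 hp).hasFDerivAt)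
    (Filter.mem_of_superset hV fun p hp => (hfy p.1 p.2 hp).hasFDerivAt)
    (ContinuousLinearMap.toSpanSingletonCLE.continuous.continuousAt.comp
      (hcx.continuousAt hV))
    (ContinuousLinearMap.toSpanSingletonCLE.continuous.continuousAt.comp
      (hcy.continuousAt hV))
  have hderiv := hstrict.hasFDerivAt.comp z Complex.equivRealProdCLM.hasFDerivAt
  refine ⟨_, hderiv, ?_⟩
  have hcr' := congrArg (u * ·) (hcr z.re z.im hz)
  simp only [mul_add, ← mul_assoc, mul_self_eq_neg_one_of_mem_SpH hu, neg_one_mul, mul_zero] at hcr'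
  simpa [Function.HasUncurry.uncurry, add_neg_eq_zero, eq_comm] using hcr'

theorem frequently_nhdsNE_ofReal {p : ℂ → Prop} (h : ∀ t : ℝ, p t) (x : ℝ) :
    ∃ᶠ z in 𝓝[≠] (x : ℂ), p z :=
  (Complex.continuous_ofReal.continuousWithinAt.tendsto_nhdsWithin
    fun _ ht => Complex.ofReal_injective.ne ht).frequently (.of_forall (f := 𝓝[≠] x) h)

theorem two_mul_sliceEmb (hI : I ∈ SpH) (hJ : J ∈ SpH) (c : ℂ) :
    2 * sliceEmb J hJ c =
      (1 - J * I) * sliceEmb I hI c + (1 + J * I) * sliceEmb (-I) (neg_mem_SpH hI) c := by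
  have h (r : ℝ) : (r : ℍ[ℝ]) = r • (1 : ℍ[ℝ]) := by rw [← coe_mul_eq_smul, mul_one]
  rw [two_mul]
  simp only [sliceEmb_apply, h, mul_add, add_mul, sub_mul, one_mul, mul_one, mul_smul_comm,
    smul_neg, mul_neg, mul_assoc, mul_self_eq_neg_one_of_mem_SpH hI]
  module

theorem SliceRegularOn.two_mul_apply_sliceEmb {s : ℍ[ℝ] → ℍ[ℝ]} (hs : SliceRegularOn s Ω)
    (hΩ : IsSDomain Ω) (hax : AxSymm Ω) (hI : I ∈ SpH) (hJ : J ∈ SpH) {z : ℂ}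
    (hz : sliceEmb J hJ z ∈ Ω) :
    2 * s (sliceEmb J hJ z) =
      (1 - J * I) * s (sliceEmb I hI z) + (1 + J * I) * s (sliceEmb (-I) (neg_mem_SpH hI) z) := by
  set U := sliceEmb J hJ ⁻¹' Ω
  have hU : IsOpen U := hΩ.1.preimage (isometry_sliceEmb hJ).continuous
  have hU' : IsPreconnected U := by
    rw [← (isometry_sliceEmb hJ).isEmbedding.isInducing.isPreconnected_image,
      Set.image_preimage_eq_inter_range, range_sliceEmb]
    exact (hΩ.2.2.2 J hJ).isPreconnected
  have hCR {v : ℍ[ℝ]} (hv : v ∈ SpH) : CauchyRiemannOn v (fun z => s (sliceEmb v hv z)) U :=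
    ((hs v hv).cauchyRiemannOn hv hΩ.1).mono fun _ hz => hax.sliceEmb_mem hJ hv hz
  have hII := mul_self_eq_neg_one_of_mem_SpH hI
  have hJJ := mul_self_eq_neg_one_of_mem_SpH hJ
  have h₁ := (hCR hJ).const_mul (c := 2) (by rw [two_mul, mul_two])
  have h₂ := ((hCR hI).const_mul (c := 1 - J * I) (v := J) (by
      rw [sub_mul, mul_sub, one_mul, mul_one, mul_assoc, hII, ← mul_assoc, hJJ]; noncomm_ring)).add
    ((hCR (neg_mem_SpH hI)).const_mul (c := 1 + J * I) (v := J) (by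
      rw [add_mul, mul_add, one_mul, mul_one, mul_neg, mul_assoc, hII, ← mul_assoc, hJJ]
      noncomm_ring))
  obtain ⟨x₀, hx₀⟩ := hΩ.2.2.1
  refine h₁.eqOn_of_preconnected_of_frequently_eq hJ h₂ hU hU' (z₀ := x₀) ?_
    (frequently_nhdsNE_ofReal (fun t => ?_) x₀) hz
  · change sliceEmb J hJ x₀ ∈ Ω
    rwa [sliceEmb_ofReal]
  · simp only [sliceEmb_ofReal]
    noncomm_ring

theorem SliceRegularOn.apply_sliceEmb_eq {s : ℍ[ℝ] → ℍ[ℝ]} (hs : SliceRegularOn s Ω)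
    (hΩ : IsSDomain Ω) (hax : AxSymm Ω) (hI : I ∈ SpH) (hJ : J ∈ SpH) {z c : ℂ}
    (hz : sliceEmb J hJ z ∈ Ω) (hc : s (sliceEmb I hI z) = sliceEmb I hI c)
    (hstar : s (star (sliceEmb I hI z)) = star (s (sliceEmb I hI z))) :
    s (sliceEmb J hJ z) = sliceEmb J hJ c := by
  have h := hs.two_mul_apply_sliceEmb hΩ hax hI hJ hz
  rw [← star_sliceEmb hI, hstar, hc, star_sliceEmb, ← two_mul_sliceEmb hI hJ] at h
  exact mul_left_cancel₀ (fun h₂ => two_ne_zero (α := ℝ) (congrArg QuaternionAlgebra.re h₂)) h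

theorem apply_star_eq_star_apply {R : Type*} [NonUnitalNonAssocSemiring R] [StarRing R]
    {D : Set R} {s A B : R → R}
    (hs : ∀ w ∈ D, s w = A w * star (A (star w)) + B w * star (B (star w))) {w : R}
    (hw : w ∈ D) (hw' : star w ∈ D) : s (star w) = star (s w) := by
  rw [hs w hw, hs _ hw', star_star, star_add, star_mul, star_mul, star_star, star_star]

theorem symmetrization_regularProduct {R : Type*} [CommRing R] [StarRing R]
    (a a' b b' c c' d d' : R) :
    (a * c - b * star d') * star (a' * c' - b' * star d) +
        (a * d + b * star c') * star (a' * d' + b' * star c) =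
      (a * star a' + b * star b') * (c * star c' + d * star d') := by
  simp only [star_sub, star_add, star_mul', star_star]
  ring

theorem exists_sliceEmb_symmetrization_regularProduct (hI : I ∈ SpH)
    {a a' b b' c c' d d' : ℍ[ℝ]} (ha : a ∈ sliceL I) (ha' : a' ∈ sliceL I) (hb : b ∈ sliceL I)
    (hb' : b' ∈ sliceL I) (hc : c ∈ sliceL I) (hc' : c' ∈ sliceL I) (hd : d ∈ sliceL I)
    (hd' : d' ∈ sliceL I) :
    ∃ x y : ℂ, a * star a' + b * star b' = sliceEmb I hI x ∧
      c * star c' + d * star d' = sliceEmb I hI y ∧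
      (a * c - b * star d') * star (a' * c' - b' * star d) +
        (a * d + b * star c') * star (a' * d' + b' * star c) = sliceEmb I hI (x * y) := by
  rw [← range_sliceEmb hI] at ha ha' hb hb' hc hc' hd hd'
  obtain ⟨⟨a, rfl⟩, ⟨a', rfl⟩, ⟨b, rfl⟩, ⟨b', rfl⟩⟩ :=
    And.intro ha (And.intro ha' (And.intro hb hb'))
  obtain ⟨⟨c, rfl⟩, ⟨c', rfl⟩, ⟨d, rfl⟩, ⟨d', rfl⟩⟩ :=
    And.intro hc (And.intro hc' (And.intro hd hd'))
  refine ⟨a * star a' + b * star b', c * star c' + d * star d', ?_, ?_, ?_⟩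
  · simp only [map_add, map_mul, map_star]
  · simp only [map_add, map_mul, map_star]
  · rw [← symmetrization_regularProduct]
    simp only [map_add, map_sub, map_mul, map_star]

end

theorem symmetrization_of_product_general
    (Ω : Set ℍ[ℝ]) (hΩ : IsSDomain Ω) (hax : AxSymm Ω)
    (I : ℍ[ℝ]) (hI : I ∈ SpH)
    (F G H K : ℍ[ℝ] → ℍ[ℝ])
    (hFm : Set.MapsTo F (Ω ∩ sliceL I) (sliceL I))
    (hGm : Set.MapsTo G (Ω ∩ sliceL I) (sliceL I))
    (hHm : Set.MapsTo H (Ω ∩ sliceL I) (sliceL I))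
    (hKm : Set.MapsTo K (Ω ∩ sliceL I) (sliceL I))
    -- the splitting components of the regular product `f ∗ g`
    (P Q : ℍ[ℝ] → ℍ[ℝ])
    (hP : ∀ z : ℍ[ℝ], P z = F z * H z - G z * star (K (star z)))
    (hQ : ∀ z : ℍ[ℝ], Q z = F z * K z + G z * star (H (star z)))
    -- `s₁ = (f ∗ g)ˢ`
    (s₁ : ℍ[ℝ] → ℍ[ℝ]) (hs₁reg : SliceRegularOn s₁ Ω)
    (hs₁ : ∀ z ∈ Ω ∩ sliceL I, s₁ z = P z * star (P (star z)) + Q z * star (Q (star z)))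
    -- `s₂ = fˢ`
    (s₂ : ℍ[ℝ] → ℍ[ℝ]) (hs₂reg : SliceRegularOn s₂ Ω)
    (hs₂ : ∀ z ∈ Ω ∩ sliceL I, s₂ z = F z * star (F (star z)) + G z * star (G (star z)))
    -- `s₃ = gˢ`
    (s₃ : ℍ[ℝ] → ℍ[ℝ]) (hs₃reg : SliceRegularOn s₃ Ω)
    (hs₃ : ∀ z ∈ Ω ∩ sliceL I, s₃ z = H z * star (H (star z)) + K z * star (K (star z))) :
    ∀ q ∈ Ω, s₁ q = s₂ q * s₃ q ∧ s₁ q = s₃ q * s₂ q := by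
  intro q hq
  obtain ⟨J, hJ, z, rfl⟩ := exists_sliceEmb_eq q
  have hw : sliceEmb I hI z ∈ Ω ∩ sliceL I :=
    ⟨hax.sliceEmb_mem hJ hI hq, sliceEmb_mem_sliceL hI z⟩
  have hw' := hax.star_mem hI hw
  obtain ⟨c₂, c₃, h₂, h₃, h₁⟩ := exists_sliceEmb_symmetrization_regularProduct hI
    (hFm hw) (hFm hw') (hGm hw) (hGm hw') (hHm hw) (hHm hw') (hKm hw) (hKm hw')
  have transfer {s A B : ℍ[ℝ] → ℍ[ℝ]} (hs : SliceRegularOn s Ω)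
      (hsAB : ∀ w ∈ Ω ∩ sliceL I, s w = A w * star (A (star w)) + B w * star (B (star w)))
      {c : ℂ} (hc : s (sliceEmb I hI z) = sliceEmb I hI c) :
      s (sliceEmb J hJ z) = sliceEmb J hJ c :=
    hs.apply_sliceEmb_eq hΩ hax hI hJ hq hc (apply_star_eq_star_apply hsAB hw hw')
  rw [transfer hs₁reg hs₁ (c := c₂ * c₃) (by rw [hs₁ _ hw, hP, hP, hQ, hQ, star_star]; exact h₁),
    transfer hs₂reg hs₂ ((hs₂ _ hw).trans h₂), transfer hs₃reg hs₃ ((hs₃ _ hw).trans h₃)]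
  exact ⟨map_mul _ _ _, by rw [mul_comm, map_mul]⟩

/-- `(f ∗ g)ˢ = fˢ gˢ = gˢ fˢ`. -/
theorem symmetrization_of_product
    (Ω : Set ℍ[ℝ]) (hΩ : IsSDomain Ω) (hax : AxSymm Ω)
    (f g : ℍ[ℝ] → ℍ[ℝ]) (hf : SliceRegularOn f Ω) (hg : SliceRegularOn g Ω)
    (I J : ℍ[ℝ]) (hI : I ∈ SpH) (hJ : J ∈ SpH) (hperp : (I * star J).re = 0)
    (F G H K : ℍ[ℝ] → ℍ[ℝ])
    (hF : SliceHolomorphicOn I F (Ω ∩ sliceL I)) (hFm : Set.MapsTo F (Ω ∩ sliceL I) (sliceL I))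
    (hG : SliceHolomorphicOn I G (Ω ∩ sliceL I)) (hGm : Set.MapsTo G (Ω ∩ sliceL I) (sliceL I))
    (hH : SliceHolomorphicOn I H (Ω ∩ sliceL I)) (hHm : Set.MapsTo H (Ω ∩ sliceL I) (sliceL I))
    (hK : SliceHolomorphicOn I K (Ω ∩ sliceL I)) (hKm : Set.MapsTo K (Ω ∩ sliceL I) (sliceL I))
    (hfs : ∀ z ∈ Ω ∩ sliceL I, f z = F z + G z * J)
    (hgs : ∀ z ∈ Ω ∩ sliceL I, g z = H z + K z * J)
    -- the splitting components of the regular product `f ∗ g`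
    (P Q : ℍ[ℝ] → ℍ[ℝ])
    (hP : ∀ z : ℍ[ℝ], P z = F z * H z - G z * star (K (star z)))
    (hQ : ∀ z : ℍ[ℝ], Q z = F z * K z + G z * star (H (star z)))
    -- `s₁ = (f ∗ g)ˢ`
    (s₁ : ℍ[ℝ] → ℍ[ℝ]) (hs₁reg : SliceRegularOn s₁ Ω)
    (hs₁ : ∀ z ∈ Ω ∩ sliceL I, s₁ z = P z * star (P (star z)) + Q z * star (Q (star z)))
    -- `s₂ = fˢ`
    (s₂ : ℍ[ℝ] → ℍ[ℝ]) (hs₂reg : SliceRegularOn s₂ Ω)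
    (hs₂ : ∀ z ∈ Ω ∩ sliceL I, s₂ z = F z * star (F (star z)) + G z * star (G (star z)))
    -- `s₃ = gˢ`
    (s₃ : ℍ[ℝ] → ℍ[ℝ]) (hs₃reg : SliceRegularOn s₃ Ω)
    (hs₃ : ∀ z ∈ Ω ∩ sliceL I, s₃ z = H z * star (H (star z)) + K z * star (K (star z))) :
    ∀ q ∈ Ω, s₁ q = s₂ q * s₃ q ∧ s₁ q = s₃ q * s₂ q :=
  symmetrization_of_product_general Ω hΩ hax I hI F G H K hFm hGm hHm hKm P Q hP hQ s₁ hs₁reg hs₁ s₂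
    hs₂reg hs₂ s₃ hs₃reg hs₃
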